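/- Fix σ_a ∈ ℝ with 0 < σ_a² < 1, let f(x) = (√(1−x²) + (π − arccos x)·x)/π, and fix t ∈ [−1,1]. Define the sequence (g_l) by g_0 = t and g_l = σ_a²·f(g_{l−1}) + (1−σ_a²)·t for l ≥ 1. Then g_l converges as l → ∞ to g(t), the unique fixed point in [−1,1] of x = σ_a²·f(x) + (1−σ_a²)·t, with |g_l − g(t)| ≤ (σ_a²)^l·|t − g(t)|. -/

import Mathlib

/-!
On `(-1, 1)` the kernel `f` has derivative `1 - arccos x / π ∈ [0, 1]`, so `f` and `x ↦ x - f x`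
are monotone on `[-1, 1]`; hence `f` is 1-Lipschitz there and maps `[-1, 1]` into `[0, 1]`.
The map `x ↦ σ_a² f(x) + (1 - σ_a²) t` is therefore a `σ_a²`-contraction of `[-1, 1]`, and the
Banach fixed-point theorem gives the unique fixed point, the convergence of the iterates `g_l`,
and the geometric rate.
-/

open Real Set Filter

/-- The dual kernel of the normalized ReLU activation `φ(x) = √2·max(x,0)`. -/
noncomputable def fDual (x : ℝ) : ℝ :=
  (Real.sqrt (1 - x ^ 2) + (Real.pi - Real.arccos x) * x) / Real.pi

/-- The layerwise conjugate-kernel recursion of a ReLU implicit neural network,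
evaluated at the inner product `t`: `g₀ = t`, `g_l = σa²·f(g_{l-1}) + (1-σa²)·t`. -/
noncomputable def ckSeq (σa t : ℝ) : ℕ → ℝ
  | 0 => t
  | l + 1 => σa ^ 2 * fDual (ckSeq σa t l) + (1 - σa ^ 2) * t

lemma continuous_fDual : Continuous fDual := by
  unfold fDual; fun_prop

lemma hasDerivAt_fDual {x : ℝ} (hx : x ∈ Ioo (-1 : ℝ) 1) :
    HasDerivAt fDual (1 - arccos x / π) x := by
  have hsq : 0 < 1 - x ^ 2 := by nlinarith [hx.1, hx.2]
  have hroot := ((hasDerivAt_pow 2 x).const_sub 1).sqrt hsq.ne'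
  have harc := ((hasDerivAt_arccos hx.1.ne' hx.2.ne).const_sub π).mul (hasDerivAt_id' x)
  refine ((hroot.add harc).div_const π).congr_deriv ?_
  -- the `x / √(1 - x²)` contributions of the two summands cancel
  have : 0 < √(1 - x ^ 2) := Real.sqrt_pos.2 hsq
  field_simp
  ring

lemma monotoneOn_fDual : MonotoneOn fDual (Icc (-1) 1) := by
  refine monotoneOn_of_hasDerivWithinAt_nonneg (f' := fun x => 1 - arccos x / π) (convex_Icc _ _)
    continuous_fDual.continuousOn (fun x hx => ?_) fun x _ => ?_
  · rw [interior_Icc] at hx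
    exact (hasDerivAt_fDual hx).hasDerivWithinAt
  · rw [sub_nonneg, div_le_one pi_pos]
    exact arccos_le_pi x

lemma monotoneOn_sub_fDual : MonotoneOn (fun x => x - fDual x) (Icc (-1) 1) := by
  refine monotoneOn_of_hasDerivWithinAt_nonneg (f' := fun x => 1 - (1 - arccos x / π))
    (convex_Icc _ _) (continuous_id.sub continuous_fDual).continuousOn (fun x hx => ?_)
    fun x _ => ?_
  · rw [interior_Icc] at hx
    exact ((hasDerivAt_id x).sub (hasDerivAt_fDual hx)).hasDerivWithinAt
  · rw [sub_sub_cancel]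
    exact div_nonneg (arccos_nonneg x) pi_pos.le

lemma LipschitzOnWith.of_monotoneOn_of_monotoneOn_sub {f : ℝ → ℝ} {s : Set ℝ}
    (hf : MonotoneOn f s) (hsub : MonotoneOn (fun x => x - f x) s) : LipschitzOnWith 1 f s := by
  refine LipschitzOnWith.of_le_add_mul 1 fun x hx y hy => ?_
  rw [NNReal.coe_one, one_mul, Real.dist_eq]
  rcases le_total x y with hxy | hyx
  · linarith [hf hx hy hxy, abs_nonneg (x - y)]
  · linarith [hsub hy hx hyx, le_abs_self (x - y)]

lemma lipschitzOnWith_fDual : LipschitzOnWith 1 fDual (Icc (-1) 1) :=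
  .of_monotoneOn_of_monotoneOn_sub monotoneOn_fDual monotoneOn_sub_fDual

lemma mapsTo_fDual : MapsTo fDual (Icc (-1) 1) (Icc 0 1) := by
  have hneg : fDual (-1) = 0 := by simp [fDual]
  have hone : fDual 1 = 1 := by simp [fDual]
  intro x hx
  exact ⟨hneg ▸ monotoneOn_fDual (left_mem_Icc.2 (by norm_num)) hx hx.1,
    hone ▸ monotoneOn_fDual hx (right_mem_Icc.2 (by norm_num)) hx.2⟩

noncomputable def ckMap (σa t x : ℝ) : ℝ := σa ^ 2 * fDual x + (1 - σa ^ 2) * t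

lemma ckSeq_eq_iterate (σa t : ℝ) (l : ℕ) : ckSeq σa t l = (ckMap σa t)^[l] t := by
  induction l with
  | zero => rfl
  | succ l ih => rw [Function.iterate_succ_apply', ← ih]; rfl

lemma mapsTo_ckMap {σa t : ℝ} (hσ : σa ^ 2 ≤ 1) (ht : t ∈ Icc (-1 : ℝ) 1) :
    MapsTo (ckMap σa t) (Icc (-1) 1) (Icc (-1) 1) := fun x hx => by
  obtain ⟨h0, h1⟩ := mapsTo_fDual hx
  have := sq_nonneg σa
  constructor <;> unfold ckMap <;> nlinarith [ht.1, ht.2]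

lemma lipschitzOnWith_ckMap (σa t : ℝ) :
    LipschitzOnWith (σa ^ 2).toNNReal (ckMap σa t) (Icc (-1) 1) := by
  refine LipschitzOnWith.of_dist_le_mul fun x hx y hy => ?_
  rw [Real.coe_toNNReal _ (sq_nonneg σa), Real.dist_eq, ckMap, ckMap, add_sub_add_right_eq_sub,
    ← mul_sub, abs_mul, abs_of_nonneg (sq_nonneg σa)]
  gcongr
  simpa only [NNReal.coe_one, one_mul, Real.dist_eq] using
    lipschitzOnWith_fDual.dist_le_mul x hx y hy

lemma LipschitzWith.dist_iterate_le_of_isFixedPt {α : Type*} [PseudoMetricSpace α] {K : NNReal}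
    {f : α → α} (hf : LipschitzWith K f) {p : α} (hp : Function.IsFixedPt f p) (x : α) (n : ℕ) :
    dist (f^[n] x) p ≤ K ^ n * dist x p := by
  simpa only [(hp.iterate n).eq, NNReal.coe_pow] using (hf.iterate n).dist_le_mul x p

theorem stmt_5_general (σa : ℝ) (hσ1 : σa ^ 2 < 1)
    (t : ℝ) (ht : t ∈ Set.Icc (-1 : ℝ) 1) :
    (∃! x : ℝ, x ∈ Set.Icc (-1 : ℝ) 1 ∧ x = σa ^ 2 * fDual x + (1 - σa ^ 2) * t) ∧
    (∀ gt : ℝ, gt ∈ Set.Icc (-1 : ℝ) 1 →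
      gt = σa ^ 2 * fDual gt + (1 - σa ^ 2) * t →
      Tendsto (ckSeq σa t) atTop (nhds gt) ∧
      ∀ l : ℕ, |ckSeq σa t l - gt| ≤ (σa ^ 2) ^ l * |t - gt|) := by
  have hF := mapsTo_ckMap hσ1.le ht
  have hL := (lipschitzOnWith_ckMap σa t).mapsToRestrict hF
  have hK : ContractingWith _ (hF.restrict _ _ _) := ⟨Real.toNNReal_lt_one.2 hσ1, hL⟩
  obtain ⟨g, hg, hgfix, hlim, -⟩ :=
    hK.exists_fixedPoint' isClosed_Icc.isComplete hF ht (edist_ne_top _ _)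
  have huniq : ∀ x ∈ Icc (-1 : ℝ) 1, x = ckMap σa t x → x = g := fun x hx hxfix =>
    congrArg Subtype.val (hK.fixedPoint_unique' (x := ⟨x, hx⟩) (y := ⟨g, hg⟩)
      (Subtype.ext hxfix.symm) (Subtype.ext hgfix))
  refine ⟨⟨g, ⟨hg, hgfix.symm⟩, fun x hx => huniq x hx.1 hx.2⟩, fun gt hgt hgtfix => ?_⟩
  obtain rfl := huniq gt hgt hgtfix
  refine ⟨funext (ckSeq_eq_iterate σa t) ▸ hlim, fun l => ?_⟩
  have := hL.dist_iterate_le_of_isFixedPt (p := ⟨gt, hgt⟩) (Subtype.ext hgfix) ⟨t, ht⟩ l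
  simpa only [Subtype.dist_eq, hF.coe_iterate_restrict, Real.dist_eq, ← ckSeq_eq_iterate,
    Real.coe_toNNReal _ (sq_nonneg σa)] using this

theorem stmt_5 (σa : ℝ) (hσ0 : 0 < σa ^ 2) (hσ1 : σa ^ 2 < 1)
    (t : ℝ) (ht : t ∈ Set.Icc (-1 : ℝ) 1) :
    (∃! x : ℝ, x ∈ Set.Icc (-1 : ℝ) 1 ∧ x = σa ^ 2 * fDual x + (1 - σa ^ 2) * t) ∧
    (∀ gt : ℝ, gt ∈ Set.Icc (-1 : ℝ) 1 →
      gt = σa ^ 2 * fDual gt + (1 - σa ^ 2) * t →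
      Tendsto (ckSeq σa t) atTop (nhds gt) ∧
      ∀ l : ℕ, |ckSeq σa t l - gt| ≤ (σa ^ 2) ^ l * |t - gt|) :=
  stmt_5_general σa hσ1 t ht
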